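/- Correctness of the reduction underlying the NP-hardness of control for two candidates: in the two-candidate reduced instance, there exists W ⊆ V \ {u_1} such that candidate 1 uniquely wins the election restricted to W, if and only if there exists A ⊆ {1, …, m} with |A| = ℓ and ⋃_{i ∈ A} S_i = {1, …, 3ℓ}. -/

import Mathlib

/-- Vertices of the two-candidate reduced instance: the path vertices
`u_1, …, u_{ℓ(3m−1)}` (0-indexed as `u i` for `i : Fin (ℓ * (3 * m - 1))`, so `u_1` is
`u ⟨0, _⟩`), the vertex `r`, the vertices `v_1, …, v_m`, and the vertices `w_{j,k}` for
`j ∈ [m]`, `k ∈ [3ℓ]` (both 0-indexed). -/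
inductive V2 (ℓ m : ℕ) : Type
  | u (i : Fin (ℓ * (3 * m - 1))) : V2 ℓ m
  | r : V2 ℓ m
  | v (i : Fin m) : V2 ℓ m
  | w (j : Fin m) (k : Fin (3 * ℓ)) : V2 ℓ m
  deriving DecidableEq

/-- Base edge relation of the two-candidate reduced instance: `u_i ~ u_{i+1}`,
`u_{ℓ(3m−1)} ~ r`, `r ~ v_i` for all `i`, and `v_i ~ w_{j,k}` iff `k ∈ S i`. -/
def baseRel2 (ℓ m : ℕ) (S : Fin m → Finset (Fin (3 * ℓ))) :
    V2 ℓ m → V2 ℓ m → Prop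
  | .u i, .u i' => (i : ℕ) + 1 = (i' : ℕ)
  | .u i, .r => (i : ℕ) + 1 = ℓ * (3 * m - 1)
  | .r, .v _ => True
  | .v i, .w _ k => k ∈ S i
  | _, _ => False

/-- The graph of the two-candidate reduced instance. -/
def G2 (ℓ m : ℕ) (S : Fin m → Finset (Fin (3 * ℓ))) : SimpleGraph (V2 ℓ m) :=
  SimpleGraph.fromRel (baseRel2 ℓ m S)

/-- The voting function of the two-candidate reduced instance: `u`'s and `v`'s vote for
candidate `0`; `r` and the `w`'s vote for candidate `1`. -/
def τ2 (ℓ m : ℕ) : V2 ℓ m → Fin 2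
  | .u _ => 0
  | .r => 1
  | .v _ => 0
  | .w _ _ => 1

/-- The distinguished vertex `x = u_1`. -/
def x2 (ℓ m : ℕ) (h : 0 < ℓ * (3 * m - 1)) : V2 ℓ m := V2.u ⟨0, h⟩

/-- `HW G W x`: the set of vertices reachable from `x` in the subgraph of `G` induced on
the complement of `W` (each step of a connecting walk must avoid `W`). -/
def HW {V : Type*} (G : SimpleGraph V) (W : Set V) (x : V) : Set V :=
  {z | Relation.ReflTransGen (fun a b => G.Adj a b ∧ a ∉ W ∧ b ∉ W) x z}

/-- With two candidates, candidate `1` uniquely wins the election restricted to `W` iff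
`|H_W ∩ τ⁻¹(1)| > |H_W ∩ τ⁻¹(0)|`. -/
def wins2 (ℓ m : ℕ) (S : Fin m → Finset (Fin (3 * ℓ))) (x : V2 ℓ m)
    (W : Set (V2 ℓ m)) : Prop :=
  (HW (G2 ℓ m S) W x ∩ τ2 ℓ m ⁻¹' {0}).ncard <
    (HW (G2 ℓ m S) W x ∩ τ2 ℓ m ⁻¹' {1}).ncard

deriving instance Fintype for V2

namespace TwoCR

/-- Rank function for the path invariant. -/
def rnk (ℓ m : ℕ) : V2 ℓ m → ℕ
  | .u i => (i : ℕ)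
  | _ => ℓ * (3 * m - 1) - 1

variable {ℓ m : ℕ} {S : Fin m → Finset (Fin (3 * ℓ))} {W : Set (V2 ℓ m)}

lemma adj_iff {a b : V2 ℓ m} :
    (G2 ℓ m S).Adj a b ↔ a ≠ b ∧ (baseRel2 ℓ m S a b ∨ baseRel2 ℓ m S b a) :=
  SimpleGraph.fromRel_adj _ a b

lemma hw_refl {V : Type*} (G : SimpleGraph V) (W : Set V) (x : V) :
    x ∈ HW G W x := Relation.ReflTransGen.refl

lemma hw_tail {V : Type*} {G : SimpleGraph V} {W : Set V} {x a b : V}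
    (h : a ∈ HW G W x) (hab : G.Adj a b) (ha : a ∉ W) (hb : b ∉ W) :
    b ∈ HW G W x :=
  Relation.ReflTransGen.tail h ⟨hab, ha, hb⟩

lemma hw_not_mem {V : Type*} {G : SimpleGraph V} {W : Set V} {x z : V}
    (hx : x ∉ W) (hz : z ∈ HW G W x) : z ∉ W := by
  rcases Relation.ReflTransGen.cases_tail hz with h | ⟨c, _, hs⟩
  · rwa [h]
  · exact hs.2.2

lemma reach_u (hL : 0 < ℓ * (3 * m - 1)) (hx : x2 ℓ m hL ∉ W) :
    ∀ z ∈ HW (G2 ℓ m S) W (x2 ℓ m hL), ∀ j : Fin (ℓ * (3 * m - 1)),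
      (j : ℕ) ≤ rnk ℓ m z →
      V2.u j ∉ W ∧ V2.u j ∈ HW (G2 ℓ m S) W (x2 ℓ m hL) := by
  intro z hz
  simp only [HW, Set.mem_setOf_eq] at hz
  induction hz with
  | refl =>
    intro j hj
    have hj0 : (j : ℕ) = 0 := by
      simp only [x2, rnk] at hj; omega
    have hje : j = ⟨0, hL⟩ := Fin.ext hj0
    subst hje
    exact ⟨hx, hw_refl _ _ _⟩
  | @tail b c hb hstep ih =>
    have hmem : c ∈ HW (G2 ℓ m S) W (x2 ℓ m hL) :=
      Relation.ReflTransGen.tail hb hstep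
    obtain ⟨hadj, hbW, hcW⟩ := hstep
    rw [adj_iff] at hadj
    obtain ⟨hne, hrel⟩ := hadj
    intro j hj
    cases b with
    | u i =>
      cases c with
      | u i' =>
        have hrel' : (i : ℕ) + 1 = (i' : ℕ) ∨ (i' : ℕ) + 1 = (i : ℕ) := by
          simpa [baseRel2] using hrel
        simp only [rnk] at hj
        by_cases hji : (j : ℕ) ≤ (i : ℕ)
        · exact ih j (by simp only [rnk]; omega)
        · have : j = i' := Fin.ext (by omega)
          subst this
          exact ⟨hcW, hmem⟩
      | r =>
        have hrel' : (i : ℕ) + 1 = ℓ * (3 * m - 1) := by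
          simpa [baseRel2] using hrel
        refine ih j ?_
        simp only [rnk] at hj ⊢
        omega
      | v i' => exact absurd hrel (by simp [baseRel2])
      | w j' k' => exact absurd hrel (by simp [baseRel2])
    | r =>
      cases c with
      | u i' =>
        have hrel' : (i' : ℕ) + 1 = ℓ * (3 * m - 1) := by
          simpa [baseRel2] using hrel
        refine ih j ?_
        simp only [rnk] at hj ⊢
        omega
      | r => exact absurd rfl hne
      | v i' => exact ih j (by simpa [rnk] using hj)
      | w j' k' => exact absurd hrel (by simp [baseRel2])
    | v i =>
      cases c with
      | u i' => exact absurd hrel (by simp [baseRel2])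
      | r => exact ih j (by simpa [rnk] using hj)
      | v i' => exact absurd hrel (by simp [baseRel2])
      | w j' k' => exact ih j (by simpa [rnk] using hj)
    | w j' k' =>
      cases c with
      | u i' => exact absurd hrel (by simp [baseRel2])
      | r => exact absurd hrel (by simp [baseRel2])
      | v i' => exact ih j (by simpa [rnk] using hj)
      | w j'' k'' => exact absurd hrel (by simp [baseRel2])

lemma w_pred {hL : 0 < ℓ * (3 * m - 1)} {j : Fin m} {k : Fin (3 * ℓ)}
    (hw : V2.w j k ∈ HW (G2 ℓ m S) W (x2 ℓ m hL)) :
    ∃ i : Fin m, V2.v i ∉ W ∧ k ∈ S i := by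
  rcases Relation.ReflTransGen.cases_tail hw with h | ⟨c, _, hs⟩
  · exact absurd h (by simp [x2])
  · obtain ⟨hadj, hcW, _⟩ := hs
    rw [adj_iff] at hadj
    obtain ⟨hne, hrel⟩ := hadj
    cases c with
    | u i => exact absurd hrel (by simp [baseRel2])
    | r => exact absurd hrel (by simp [baseRel2])
    | v i => exact ⟨i, hcW, by simpa [baseRel2] using hrel⟩
    | w j' k' => exact absurd hrel (by simp [baseRel2])

lemma only_u {hL : 0 < ℓ * (3 * m - 1)}
    (hr : V2.r ∉ HW (G2 ℓ m S) W (x2 ℓ m hL)) :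
    ∀ z ∈ HW (G2 ℓ m S) W (x2 ℓ m hL), ∃ i, z = V2.u i := by
  intro z hz
  simp only [HW, Set.mem_setOf_eq] at hz
  induction hz with
  | refl => exact ⟨_, rfl⟩
  | @tail b c hb hstep ih =>
    have hmem : c ∈ HW (G2 ℓ m S) W (x2 ℓ m hL) :=
      Relation.ReflTransGen.tail hb hstep
    obtain ⟨i, rfl⟩ := ih
    obtain ⟨hadj, _, _⟩ := hstep
    rw [adj_iff] at hadj
    cases c with
    | u i' => exact ⟨i', rfl⟩
    | r => exact absurd hmem hr
    | v i' => exact absurd hadj.2 (by simp [baseRel2])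
    | w j' k' => exact absurd hadj.2 (by simp [baseRel2])

lemma reach_path (hL : 0 < ℓ * (3 * m - 1))
    (hu : ∀ i : Fin (ℓ * (3 * m - 1)), V2.u i ∉ W) :
    ∀ i : Fin (ℓ * (3 * m - 1)), V2.u i ∈ HW (G2 ℓ m S) W (x2 ℓ m hL) := by
  have key : ∀ n (h : n < ℓ * (3 * m - 1)),
      V2.u ⟨n, h⟩ ∈ HW (G2 ℓ m S) W (x2 ℓ m hL) := by
    intro n
    induction n with
    | zero => intro h; exact Relation.ReflTransGen.refl
    | succ n ihn =>
      intro h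
      have hn : n < ℓ * (3 * m - 1) := by omega
      refine hw_tail (ihn hn) ?_ (hu _) (hu _)
      rw [adj_iff]
      refine ⟨by simp only [ne_eq, V2.u.injEq, Fin.mk.injEq]; omega, Or.inl ?_⟩
      simp [baseRel2]
  intro i
  cases i with
  | mk n hn => exact key n hn

end TwoCR

/-- Correctness of the reduction: some deletion set `W ⊆ V \ {u_1}` makes candidate `1`
uniquely win iff there is an exact cover `A ⊆ [m]` with `|A| = ℓ` and
`⋃_{i ∈ A} S_i = {1, …, 3ℓ}`. -/
theorem two_candidate_reduction_correct (ℓ m : ℕ) (hℓ : 1 ≤ ℓ) (hm : 1 ≤ m)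
    (S : Fin m → Finset (Fin (3 * ℓ)))
    (hS3 : ∀ i, (S i).card = 3)
    (hcov : Finset.univ.biUnion S = Finset.univ) :
    (∃ W : Set (V2 ℓ m), x2 ℓ m (Nat.mul_pos hℓ (by omega)) ∉ W ∧
      wins2 ℓ m S (x2 ℓ m (Nat.mul_pos hℓ (by omega))) W) ↔
    (∃ A : Finset (Fin m), A.card = ℓ ∧ A.biUnion S = Finset.univ) := by
  classical
  have hL : 0 < ℓ * (3 * m - 1) := Nat.mul_pos hℓ (by omega)
  have hA3 : ℓ * (3 * m - 1) + ℓ = 3 * (ℓ * m) := by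
    have h2 : 3 * m - 1 + 1 = 3 * m := by omega
    calc ℓ * (3 * m - 1) + ℓ = ℓ * ((3 * m - 1) + 1) := by ring
      _ = ℓ * (3 * m) := by rw [h2]
      _ = 3 * (ℓ * m) := by ring
  have hui : Function.Injective (V2.u : Fin (ℓ * (3 * m - 1)) → V2 ℓ m) := by
    intro a b h; rwa [V2.u.injEq] at h
  have hvi : Function.Injective (V2.v : Fin m → V2 ℓ m) := by
    intro a b h; rwa [V2.v.injEq] at h
  have hwi : Function.Injective
      (fun p : Fin m × Fin (3 * ℓ) => V2.w p.1 p.2) := by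
    intro p q h
    simp only [V2.w.injEq] at h
    exact Prod.ext h.1 h.2
  have c10 : ((1 : Fin 2) = 0) ↔ False := by decide
  have c01 : ((0 : Fin 2) = 1) ↔ False := by decide
  constructor
  · rintro ⟨W, hxW0, hwin0⟩
    have hxW : x2 ℓ m hL ∉ W := hxW0
    have hwin : (HW (G2 ℓ m S) W (x2 ℓ m hL) ∩ τ2 ℓ m ⁻¹' {0}).ncard <
        (HW (G2 ℓ m S) W (x2 ℓ m hL) ∩ τ2 ℓ m ⁻¹' {1}).ncard := hwin0
    by_cases hr : V2.r ∈ HW (G2 ℓ m S) W (x2 ℓ m hL)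
    · -- main case
      have hrW : V2.r ∉ W := TwoCR.hw_not_mem hxW hr
      have uAll : ∀ j : Fin (ℓ * (3 * m - 1)),
          V2.u j ∉ W ∧ V2.u j ∈ HW (G2 ℓ m S) W (x2 ℓ m hL) := by
        intro j
        refine TwoCR.reach_u hL hxW _ hr j ?_
        simp only [TwoCR.rnk]
        have := j.isLt
        omega
      set A : Finset (Fin m) := Finset.univ.filter (fun i => V2.v i ∉ W) with hAdef
      have hvmem : ∀ i ∈ A, V2.v i ∈ HW (G2 ℓ m S) W (x2 ℓ m hL) := by
        intro i hi
        have hiW : V2.v i ∉ W := (Finset.mem_filter.mp hi).2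
        refine TwoCR.hw_tail hr ?_ hrW hiW
        rw [TwoCR.adj_iff]
        exact ⟨fun h => (by cases h), Or.inl (by simp [baseRel2])⟩
      set B : Finset (Fin (3 * ℓ)) := A.biUnion S with hBdef
      have hdisj : Disjoint (Finset.univ.image (V2.u : Fin (ℓ * (3 * m - 1)) → V2 ℓ m))
          (A.image V2.v) := by
        rw [Finset.disjoint_left]
        rintro z hz1 hz2
        simp only [Finset.mem_image] at hz1 hz2
        obtain ⟨a, -, rfl⟩ := hz1
        obtain ⟨b, -, hb⟩ := hz2
        cases hb
      have hF0card : ((Finset.univ.image V2.u ∪ A.image V2.v : Finset (V2 ℓ m))).card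
          = ℓ * (3 * m - 1) + A.card := by
        rw [Finset.card_union_of_disjoint hdisj,
          Finset.card_image_of_injective _ hui,
          Finset.card_image_of_injective _ hvi, Finset.card_univ, Fintype.card_fin]
      have hlow : ℓ * (3 * m - 1) + A.card ≤
          (HW (G2 ℓ m S) W (x2 ℓ m hL) ∩ τ2 ℓ m ⁻¹' {0}).ncard := by
        have hsub : (↑((Finset.univ.image V2.u ∪ A.image V2.v : Finset (V2 ℓ m))) : Set (V2 ℓ m)) ⊆
            HW (G2 ℓ m S) W (x2 ℓ m hL) ∩ τ2 ℓ m ⁻¹' {0} := by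
          intro z hz
          simp only [Finset.coe_union, Set.mem_union, Finset.mem_coe,
            Finset.mem_image, Finset.mem_univ, true_and] at hz
          rcases hz with ⟨a, rfl⟩ | ⟨b, hbA, rfl⟩
          · exact ⟨(uAll a).2, by simp [τ2]⟩
          · exact ⟨hvmem b hbA, by simp [τ2]⟩
        calc ℓ * (3 * m - 1) + A.card
            = ((Finset.univ.image V2.u ∪ A.image V2.v : Finset (V2 ℓ m))).card := hF0card.symm
          _ = (↑((Finset.univ.image V2.u ∪ A.image V2.v : Finset (V2 ℓ m))) : Set (V2 ℓ m)).ncard :=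
              (Set.ncard_coe_finset _).symm
          _ ≤ _ := Set.ncard_le_ncard hsub (Set.toFinite _)
      have hF1card : (insert V2.r ((Finset.univ ×ˢ B).image
          (fun p : Fin m × Fin (3 * ℓ) => V2.w p.1 p.2))).card = 1 + m * B.card := by
        rw [Finset.card_insert_of_notMem ?_,
          Finset.card_image_of_injective _ hwi,
          Finset.card_product, Finset.card_univ, Fintype.card_fin]
        · omega
        · intro hmem
          simp only [Finset.mem_image] at hmem
          obtain ⟨p, -, hp⟩ := hmem
          cases hp
      have hup : (HW (G2 ℓ m S) W (x2 ℓ m hL) ∩ τ2 ℓ m ⁻¹' {1}).ncard ≤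
          1 + m * B.card := by
        have hsub : HW (G2 ℓ m S) W (x2 ℓ m hL) ∩ τ2 ℓ m ⁻¹' {1} ⊆
            (↑(insert V2.r ((Finset.univ ×ˢ B).image
              (fun p : Fin m × Fin (3 * ℓ) => V2.w p.1 p.2))) : Set (V2 ℓ m)) := by
          rintro z ⟨hzH, hz1⟩
          simp only [Set.mem_preimage, Set.mem_singleton_iff] at hz1
          cases z with
          | u i => simp only [τ2, c01] at hz1
          | r => simp
          | v i => simp only [τ2, c01] at hz1
          | w j k =>
            obtain ⟨i, hiW, hkS⟩ := TwoCR.w_pred hzH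
            have hiA : i ∈ A := by rw [hAdef]; simp [hiW]
            have hkB : k ∈ B := by
              rw [hBdef]; exact Finset.mem_biUnion.mpr ⟨i, hiA, hkS⟩
            simp only [Finset.coe_insert, Set.mem_insert_iff, Finset.coe_image,
              Set.mem_image, Finset.mem_coe, Finset.mem_product]
            exact Or.inr ⟨(j, k), by simp [hkB], rfl⟩
        calc (HW (G2 ℓ m S) W (x2 ℓ m hL) ∩ τ2 ℓ m ⁻¹' {1}).ncard
            ≤ _ := Set.ncard_le_ncard hsub (Set.toFinite _)
          _ = _ := Set.ncard_coe_finset _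
          _ = 1 + m * B.card := hF1card
      have key : ℓ * (3 * m - 1) + A.card < 1 + m * B.card :=
        lt_of_le_of_lt hlow (lt_of_lt_of_le hwin hup)
      have hb3a : B.card ≤ 3 * A.card := by
        calc B.card ≤ ∑ i ∈ A, (S i).card := Finset.card_biUnion_le
          _ = 3 * A.card := by
              rw [Finset.sum_congr rfl fun i _ => hS3 i, Finset.sum_const,
                smul_eq_mul, mul_comm]
      have hb3l : B.card ≤ 3 * ℓ := by
        have := Finset.card_le_univ B
        rwa [Fintype.card_fin] at this
      have h1 : m * B.card ≤ 3 * (A.card * m) := by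
        calc m * B.card ≤ m * (3 * A.card) := Nat.mul_le_mul_left m hb3a
          _ = 3 * (A.card * m) := by ring
      have h2 : m * B.card ≤ 3 * (ℓ * m) := by
        calc m * B.card ≤ m * (3 * ℓ) := Nat.mul_le_mul_left m hb3l
          _ = 3 * (ℓ * m) := by ring
      have hal : ℓ ≤ A.card := by
        by_contra hlt
        push_neg at hlt
        obtain ⟨d, hd⟩ : ∃ d, ℓ = A.card + d + 1 := ⟨ℓ - A.card - 1, by omega⟩
        have hPQ : ℓ * m = A.card * m + d * m + m := by rw [hd]; ring
        have hdm : d ≤ d * m := Nat.le_mul_of_pos_right d (by omega)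
        linarith [key, h1, hA3, hPQ, hdm]
      have hau : A.card ≤ ℓ := by linarith [key, h2, hA3]
      have haeq : A.card = ℓ := le_antisymm hau hal
      have hbl : 3 * ℓ ≤ B.card := by
        have h3 : 3 * (ℓ * m) ≤ m * B.card := by linarith [key, hA3, haeq]
        have h4 : m * (3 * ℓ) ≤ m * B.card := by
          calc m * (3 * ℓ) = 3 * (ℓ * m) := by ring
            _ ≤ m * B.card := h3
        exact Nat.le_of_mul_le_mul_left h4 (by omega)
      have hbeq : B = Finset.univ :=
        Finset.eq_univ_of_card B (by rw [Fintype.card_fin]; exact le_antisymm hb3l hbl)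
      exact ⟨A, haeq, by rw [← hBdef]; exact hbeq⟩
    · -- r not reachable: contradiction
      exfalso
      have hempty : HW (G2 ℓ m S) W (x2 ℓ m hL) ∩ τ2 ℓ m ⁻¹' {1} = ∅ := by
        ext z
        simp only [Set.mem_inter_iff, Set.mem_empty_iff_false, iff_false, not_and]
        intro hzH hz1
        obtain ⟨i, rfl⟩ := TwoCR.only_u hr z hzH
        simp only [Set.mem_preimage, Set.mem_singleton_iff, τ2, c01] at hz1
      rw [hempty, Set.ncard_empty] at hwin
      exact Nat.not_lt_zero _ hwin
  · rintro ⟨A, hAcard, hAcov⟩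
    refine ⟨{z | ∃ i, i ∉ A ∧ z = V2.v i}, ?_, ?_⟩
    · rintro ⟨i, -, h⟩
      simp [x2] at h
    · show wins2 ℓ m S (x2 ℓ m hL) {z | ∃ i, i ∉ A ∧ z = V2.v i}
      set W : Set (V2 ℓ m) := {z | ∃ i, i ∉ A ∧ z = V2.v i} with hWdef
      have hxW : x2 ℓ m hL ∉ W := by rintro ⟨i, -, h⟩; simp [x2] at h
      have huW : ∀ i, V2.u i ∉ W := by rintro i ⟨i', -, h⟩; cases h
      have hrW : V2.r ∉ W := by rintro ⟨i', -, h⟩; cases h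
      have hwW : ∀ j k, V2.w j k ∉ W := by
        rintro j k ⟨i', -, h⟩; cases h
      have hvWA : ∀ i ∈ A, V2.v i ∉ W := by
        rintro i hi ⟨i', hi', h⟩
        rw [V2.v.injEq] at h
        exact hi' (h ▸ hi)
      have hvWA' : ∀ i, i ∉ A → V2.v i ∈ W := fun i hi => ⟨i, hi, rfl⟩
      have hupath := TwoCR.reach_path (S := S) (W := W) hL huW
      have hrH : V2.r ∈ HW (G2 ℓ m S) W (x2 ℓ m hL) := by
        refine TwoCR.hw_tail (hupath ⟨ℓ * (3 * m - 1) - 1, by omega⟩) ?_ (huW _) hrW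
        rw [TwoCR.adj_iff]
        refine ⟨fun h => (by cases h), Or.inl ?_⟩
        show ((⟨ℓ * (3 * m - 1) - 1, by omega⟩ : Fin (ℓ * (3 * m - 1))) : ℕ) + 1
          = ℓ * (3 * m - 1)
        simp
        omega
      have hvH : ∀ i ∈ A, V2.v i ∈ HW (G2 ℓ m S) W (x2 ℓ m hL) := by
        intro i hi
        refine TwoCR.hw_tail hrH ?_ hrW (hvWA i hi)
        rw [TwoCR.adj_iff]
        exact ⟨fun h => (by cases h), Or.inl (by simp [baseRel2])⟩
      have hwH : ∀ j k, V2.w j k ∈ HW (G2 ℓ m S) W (x2 ℓ m hL) := by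
        intro j k
        have hk : k ∈ A.biUnion S := by rw [hAcov]; exact Finset.mem_univ k
        obtain ⟨i, hiA, hkS⟩ := Finset.mem_biUnion.mp hk
        refine TwoCR.hw_tail (hvH i hiA) ?_ (hvWA i hiA) (hwW j k)
        rw [TwoCR.adj_iff]
        exact ⟨fun h => (by cases h), Or.inl (by simp [baseRel2, hkS])⟩
      have hHW : HW (G2 ℓ m S) W (x2 ℓ m hL) = Wᶜ := by
        apply Set.Subset.antisymm
        · intro z hz
          exact TwoCR.hw_not_mem hxW hz
        · intro z hz
          cases z with
          | u i => exact hupath i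
          | r => exact hrH
          | v i =>
            have hiA : i ∈ A := by
              by_contra hiA
              exact hz (hvWA' i hiA)
            exact hvH i hiA
          | w j k => exact hwH j k
      have e0 : HW (G2 ℓ m S) W (x2 ℓ m hL) ∩ τ2 ℓ m ⁻¹' {0}
          = ↑((Finset.univ.image V2.u ∪ A.image V2.v : Finset (V2 ℓ m))) := by
        rw [hHW]
        ext z
        cases z with
        | u i => simp [hWdef, τ2]
        | r => simp [hWdef, τ2, c10]
        | v i => simp [hWdef, τ2, not_not]
        | w j k => simp [hWdef, τ2, c10]
      have e1 : HW (G2 ℓ m S) W (x2 ℓ m hL) ∩ τ2 ℓ m ⁻¹' {1}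
          = ↑(insert V2.r (((Finset.univ : Finset (Fin m)) ×ˢ
              (Finset.univ : Finset (Fin (3 * ℓ)))).image
              (fun p : Fin m × Fin (3 * ℓ) => V2.w p.1 p.2))) := by
        rw [hHW]
        ext z
        cases z with
        | u i => simp [hWdef, τ2, c01]
        | r => simp [hWdef, τ2]
        | v i => simp [hWdef, τ2, c01]
        | w j k =>
          simp only [Set.mem_inter_iff, Set.mem_compl_iff, Set.mem_setOf_eq,
            Set.mem_preimage, Set.mem_singleton_iff, τ2, Finset.coe_insert,
            Set.mem_insert_iff, Finset.coe_image, Set.mem_image, Finset.mem_coe,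
            Finset.mem_product]
          constructor
          · intro _
            exact Or.inr ⟨(j, k), by simp, rfl⟩
          · intro _
            exact ⟨(by rintro ⟨i', -, h⟩; cases h), by trivial⟩
      have hdisj : Disjoint (Finset.univ.image (V2.u : Fin (ℓ * (3 * m - 1)) → V2 ℓ m))
          (A.image V2.v) := by
        rw [Finset.disjoint_left]
        rintro z hz1 hz2
        simp only [Finset.mem_image] at hz1 hz2
        obtain ⟨a, -, rfl⟩ := hz1
        obtain ⟨b, -, hb⟩ := hz2
        cases hb
      have c0 : ((Finset.univ.image V2.u ∪ A.image V2.v : Finset (V2 ℓ m))).card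
          = ℓ * (3 * m - 1) + ℓ := by
        rw [Finset.card_union_of_disjoint hdisj,
          Finset.card_image_of_injective _ hui,
          Finset.card_image_of_injective _ hvi, Finset.card_univ, Fintype.card_fin,
          hAcard]
      have c1 : (insert V2.r (((Finset.univ : Finset (Fin m)) ×ˢ
            (Finset.univ : Finset (Fin (3 * ℓ)))).image
            (fun p : Fin m × Fin (3 * ℓ) => V2.w p.1 p.2))).card
          = m * (3 * ℓ) + 1 := by
        rw [Finset.card_insert_of_notMem ?_,
          Finset.card_image_of_injective _ hwi,
          Finset.card_product, Finset.card_univ, Finset.card_univ,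
          Fintype.card_fin, Fintype.card_fin]
        · intro hmem
          simp only [Finset.mem_image] at hmem
          obtain ⟨p, -, hp⟩ := hmem
          cases hp
      show (HW (G2 ℓ m S) W (x2 ℓ m hL) ∩ τ2 ℓ m ⁻¹' {0}).ncard <
        (HW (G2 ℓ m S) W (x2 ℓ m hL) ∩ τ2 ℓ m ⁻¹' {1}).ncard
      rw [e0, e1, Set.ncard_coe_finset, Set.ncard_coe_finset, c0, c1]
      have e : m * (3 * ℓ) = 3 * (ℓ * m) := by ring
      linarith [hA3]
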